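/- Suppose the initial data z_1(0),...,z_N(0) are all nonzero, and suppose Z ∈ ℂ satisfies, for every n ∈ {1,...,N}, the constraint Z = r_n^{−1} · ∑_{j,k} c_{n,j,k} r_j r_k, where r_ℓ := z_ℓ(0)/z_N(0) and the sum runs over all pairs (j,k) ∈ {1,...,N}² with coefficients c_{n,j,k} ∈ ℂ. Then z_n(s) := z_n(0) · [z_N(0)]^{2^s − 1} · Z^{2^s − 1} satisfies the quadratic system z_n(s+1) = ∑_{j,k} c_{n,j,k} z_j(s) z_k(s) for all n ∈ {1,...,N} and all s ∈ ℕ. -/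

import Mathlib

/-!
If `r` is an eigenvector of the homogeneous quadratic map `(Q x) n = ∑ⱼ ∑ₖ c n j k · x j · x k`,
say `Q r = Z • r`, then `Q (a • r) = (Z * a ^ 2) • r`, so the system is solved by the line
`z s = a s • r` as soon as the scalars obey `a (s + 1) = Z * a s ^ 2`; with `a 0 = w` this gives
`a s = w ^ 2 ^ s * Z ^ (2 ^ s - 1)`. The constraints on `Z` say exactly that
`r = z(0) / z_N(0)` is such an eigenvector, and the proposed solution is `a s • r` with
`w = z_N(0)`.
-/

theorem pow_two_pow_succ_sub_one {M : Type*} [Monoid M] (x : M) (s : ℕ) :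
    x ^ (2 ^ (s + 1) - 1) = x * (x ^ (2 ^ s - 1)) ^ 2 := by
  have h : 2 ^ (s + 1) - 1 = 1 + (2 ^ s - 1) * 2 := by
    have := Nat.one_le_two_pow (n := s)
    rw [pow_succ]
    omega
  rw [h, pow_add, pow_one, pow_mul]

section QuadraticMap

variable {ι R : Type*} [Fintype ι] [CommSemiring R]

def quadraticMap (c : ι → ι → ι → R) (x : ι → R) : ι → R :=
  fun n => ∑ j, ∑ k, c n j k * x j * x k

theorem quadraticMap_smul (c : ι → ι → ι → R) (a : R) (x : ι → R) :
    quadraticMap c (a • x) = a ^ 2 • quadraticMap c x := by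
  ext n
  simp only [quadraticMap, Pi.smul_apply, smul_eq_mul, Finset.mul_sum]
  refine Finset.sum_congr rfl fun j _ => Finset.sum_congr rfl fun k _ => ?_
  ring

theorem quadraticMap_smul_of_eq_smul {c : ι → ι → ι → R} {r : ι → R} {Z : R}
    (hr : quadraticMap c r = Z • r) (a : R) :
    quadraticMap c (a • r) = (Z * a ^ 2) • r := by
  rw [quadraticMap_smul, hr, smul_smul, mul_comm]

theorem quadraticMap_smul_eigenvector_orbit {c : ι → ι → ι → R} {r : ι → R} {Z : R}
    (hr : quadraticMap c r = Z • r) (w : R) (s : ℕ) :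
    quadraticMap c ((w ^ 2 ^ s * Z ^ (2 ^ s - 1)) • r)
      = (w ^ 2 ^ (s + 1) * Z ^ (2 ^ (s + 1) - 1)) • r := by
  rw [quadraticMap_smul_of_eq_smul hr, pow_two_pow_succ_sub_one, pow_succ 2 s, pow_mul]
  ring_nf

end QuadraticMap

/-- The quadratic case `M = 2`: fix `N ≥ 1`, coefficients
`c n j k : ℂ`, nonzero initial data `z0`, and `Z` satisfying the constraints
`Z = rₙ⁻¹ ∑_{j,k} c n j k * r j * r k` with `rₗ = z0 ℓ / z0 (N-1)`. Then
`z n s = z0 n * (z0 (N-1))^(2^s - 1) * Z^(2^s - 1)` satisfies the quadratic system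
`z n (s+1) = ∑_{j,k} c n j k * z j s * z k s`. -/
theorem solvable_quadratic_system
    (N : ℕ) (hN : 1 ≤ N)
    (c : Fin N → Fin N → Fin N → ℂ)
    (z0 : Fin N → ℂ) (hz0 : ∀ n, z0 n ≠ 0)
    (r : Fin N → ℂ) (hr : ∀ ℓ, r ℓ = z0 ℓ / z0 ⟨N - 1, by omega⟩)
    (Z : ℂ)
    (hconstraint : ∀ n : Fin N,
      Z = (r n)⁻¹ * ∑ j : Fin N, ∑ k : Fin N, c n j k * r j * r k)
    (z : Fin N → ℕ → ℂ)
    (hz : ∀ n s, z n s =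
      z0 n * (z0 ⟨N - 1, by omega⟩) ^ (2 ^ s - 1) * Z ^ (2 ^ s - 1)) :
    ∀ (n : Fin N) (s : ℕ),
      z n (s + 1) = ∑ j : Fin N, ∑ k : Fin N, c n j k * z j s * z k s := by
  set w := z0 ⟨N - 1, by omega⟩
  have hw : w ≠ 0 := hz0 _
  have hz0_eq : ∀ ℓ, z0 ℓ = r ℓ * w := fun ℓ => by rw [hr ℓ, div_mul_cancel₀ _ hw]
  have hr_ne : ∀ ℓ, r ℓ ≠ 0 := fun ℓ => by
    rw [hr ℓ]
    exact div_ne_zero (hz0 ℓ) hw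
  have hr_eigen : quadraticMap c r = Z • r := by
    ext n
    rw [Pi.smul_apply, smul_eq_mul, hconstraint n, mul_comm, mul_inv_cancel_left₀ (hr_ne n)]
    rfl
  have hz_line : ∀ s, (z · s) = (w ^ 2 ^ s * Z ^ (2 ^ s - 1)) • r := fun s => by
    obtain ⟨m, hm⟩ : ∃ m, 2 ^ s = m + 1 := ⟨_, (Nat.sub_add_cancel Nat.one_le_two_pow).symm⟩
    ext ℓ
    rw [hz, hz0_eq, Pi.smul_apply, smul_eq_mul, hm, Nat.add_sub_cancel]
    ring
  intro n s
  have horbit := congrFun (quadraticMap_smul_eigenvector_orbit hr_eigen w s) n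
  rw [← hz_line, ← hz_line] at horbit
  exact horbit.symm
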